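/- arXiv:2507.05115 — 3 statements merged into one kernel-verified Lean document; each statement's English description precedes it below -/
import Mathlib

section
/- For h' > h > 0, the difference f(z,h) − f(z,h') is bounded above by K(h,h') := max{U'(h) − U'(h'), b·U'(bh) − b·U'(bh')} for all z ∈ ℝ, where f(z,h) = ∂_h Û(e^z,h) is the piecewise function defined from U. -/
open Set Filter Real

/-- for `h' > h > 0`, `f(z,h) − f(z,h') ≤ K(h,h')` where
`K(h,h') = max{U'(h) − U'(h'), b·U'(bh) − b·U'(bh')}`. -/
theorem stmt_4
    (U : ℝ → ℝ)
    (hC2 : ContDiffOn ℝ 2 U (Ioi 0))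
    (hU' : ∀ c > (0:ℝ), 0 < deriv U c)
    (hU'' : ∀ c > (0:ℝ), deriv (deriv U) c < 0)
    (hU'lim : Tendsto (deriv U) atTop (nhds 0))
    (b : ℝ) (hb0 : 0 < b) (hb1 : b < 1)
    (f : ℝ → ℝ → ℝ)
    (hf : ∀ z : ℝ, ∀ h > (0:ℝ),
      (exp z ≤ deriv U h → f z h = deriv U h - exp z) ∧
      (deriv U h < exp z → exp z < deriv U (b * h) → f z h = 0) ∧
      (deriv U (b * h) ≤ exp z → f z h = b * deriv U (b * h) - b * exp z)) :
    ∀ h h' : ℝ, 0 < h → h < h' → ∀ z : ℝ,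
      f z h - f z h' ≤
        max (deriv U h - deriv U h')
            (b * deriv U (b * h) - b * deriv U (b * h')) := by
  intro h h' h0 hhh' z
  have h0' : 0 < h' := h0.trans hhh'
  have hcont : ContinuousOn (deriv U) (Ioi 0) :=
    hC2.continuousOn_deriv_of_isOpen isOpen_Ioi (by exact_mod_cast one_le_two)
  have anti : StrictAntiOn (deriv U) (Ioi 0) :=
    strictAntiOn_of_deriv_neg (convex_Ioi 0) hcont
      (fun x hx => hU'' x (by simpa [interior_Ioi] using hx))
  have hbh0 : (0:ℝ) < b * h := mul_pos hb0 h0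
  have hbh'0 : (0:ℝ) < b * h' := mul_pos hb0 h0'
  obtain ⟨F1, F2, F3⟩ := hf z h h0
  obtain ⟨G1, G2, G3⟩ := hf z h' h0'
  set w := exp z with hw
  have A1 : deriv U h' < deriv U h := anti (mem_Ioi.mpr h0) (mem_Ioi.mpr h0') hhh'
  have A2 : deriv U (b*h') < deriv U (b*h) :=
    anti (mem_Ioi.mpr hbh0) (mem_Ioi.mpr hbh'0) (by nlinarith)
  have A3 : deriv U h < deriv U (b*h) :=
    anti (mem_Ioi.mpr hbh0) (mem_Ioi.mpr h0) (by nlinarith)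
  have A4 : deriv U h' < deriv U (b*h') :=
    anti (mem_Ioi.mpr hbh'0) (mem_Ioi.mpr h0') (by nlinarith)
  rcases le_or_gt w (deriv U h) with c1 | c1
  · rw [F1 c1]
    rcases le_or_gt w (deriv U h') with d1 | d1
    · rw [G1 d1]
      refine le_trans ?_ (le_max_left _ _)
      linarith
    · rcases lt_or_ge w (deriv U (b*h')) with d2 | d2
      · rw [G2 d1 d2]
        refine le_trans ?_ (le_max_left _ _)
        linarith
      · rw [G3 d2]
        refine le_trans ?_ (le_max_left _ _)
        nlinarith [mul_le_mul_of_nonneg_left d2 (by linarith : (0:ℝ) ≤ 1 - b)]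
  · rcases lt_or_ge w (deriv U (b*h)) with c2 | c2
    · rw [F2 c1 c2]
      rcases lt_or_ge w (deriv U (b*h')) with d2 | d2
      · rw [G2 (A1.trans c1) d2]
        refine le_trans ?_ (le_max_left _ _)
        linarith
      · rw [G3 d2]
        refine le_trans ?_ (le_max_right _ _)
        nlinarith [mul_le_mul_of_nonneg_left c2.le hb0.le]
    · rw [F3 c2, G3 (le_trans A2.le c2)]
      refine le_trans ?_ (le_max_right _ _)
      linarith
end

section
/- Let w ≥ 0 be continuous on ℝ × [0,T], nondecreasing in τ, and bounded above by e^z/r for each fixed z. Suppose w^∞(z) := lim_{τ→∞} w(z,τ) exists, is nondecreasing and bounded on (−∞, z₀] for some z₀, and satisfies (κ²/2) w^∞'' + ρ w^∞' ≥ δ for all z < z₀, with δ > 0. Then one derives a contradiction; i.e., no bounded nondecreasing C² function on (−∞, z₀] can satisfy (κ²/2)φ'' + ρφ' ≥ δ > 0 on (−∞, z₀). -/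
open Set Filter Topology

/-- no bounded, nondecreasing, C² function `φ` on `(−∞, z₀]`
can satisfy `(κ²/2)φ'' + ρφ' ≥ δ > 0` on `(−∞, z₀)`. -/
theorem stmt_16
    (κ ρ δ z₀ : ℝ) (hκ : κ ≠ 0) (hρ : 0 < ρ) (hδ : 0 < δ)
    (φ : ℝ → ℝ)
    (hC2 : ContDiffOn ℝ 2 φ (Iic z₀))
    (hbdd : ∃ M : ℝ, ∀ z ≤ z₀, |φ z| ≤ M)
    (hmono : MonotoneOn φ (Iic z₀))
    (hineq : ∀ z < z₀, δ ≤ κ ^ 2 / 2 * deriv (deriv φ) z + ρ * deriv φ z) :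
    False := by
  obtain ⟨M, hM⟩ := hbdd
  have hM0 : 0 ≤ M := (abs_nonneg _).trans (hM z₀ le_rfl)
  -- φ is C² on the open set Iio z₀
  have hC2o : ContDiffOn ℝ 2 φ (Iio z₀) := hC2.mono Iio_subset_Iic_self
  have hC1d : ContDiffOn ℝ 1 (deriv φ) (Iio z₀) :=
    hC2o.deriv_of_isOpen isOpen_Iio (by norm_num)
  have hdiff : ∀ z < z₀, DifferentiableAt ℝ φ z := by
    intro z hz
    exact (hC2o.differentiableOn (by norm_num)).differentiableAt
      (isOpen_Iio.mem_nhds hz)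
  have hdiff' : ∀ z < z₀, DifferentiableAt ℝ (deriv φ) z := by
    intro z hz
    exact (hC1d.differentiableOn (by norm_num)).differentiableAt (isOpen_Iio.mem_nhds hz)
  -- deriv φ ≥ 0 on Iio z₀
  have hderiv_nonneg : ∀ z < z₀, 0 ≤ deriv φ z := by
    intro z hz
    have hda : HasDerivAt φ (deriv φ z) z := (hdiff z hz).hasDerivAt
    have htend := hasDerivAt_iff_tendsto_slope.1 hda
    have hsub : Ioo z z₀ ∈ 𝓝[>] z := Ioo_mem_nhdsGT_of_mem ⟨le_rfl, hz⟩
    have htend' : Filter.Tendsto (slope φ z) (𝓝[>] z) (𝓝 (deriv φ z)) :=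
      htend.mono_left (nhdsWithin_mono z (fun y hy => ne_of_gt hy))
    refine ge_of_tendsto htend' ?_
    filter_upwards [hsub] with y hy
    have : φ z ≤ φ y := hmono (le_of_lt hz) (le_of_lt hy.2) (le_of_lt hy.1)
    have hyz : 0 < y - z := sub_pos.2 hy.1
    simpa [slope_def_field, div_nonneg, sub_nonneg] using
      div_nonneg (by linarith) (le_of_lt hyz)
  -- the auxiliary function ψ and g
  set ψ : ℝ → ℝ := fun z => κ ^ 2 / 2 * deriv φ z + ρ * φ z with hψdef
  have hψderiv : ∀ z < z₀,
      HasDerivAt ψ (κ ^ 2 / 2 * deriv (deriv φ) z + ρ * deriv φ z) z := by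
    intro z hz
    exact ((hdiff' z hz).hasDerivAt.const_mul (κ ^ 2 / 2)).add
      ((hdiff z hz).hasDerivAt.const_mul ρ)
  set c : ℝ := z₀ - 1 with hc
  have hcz : c < z₀ := by simp [hc]
  set g : ℝ → ℝ := fun z => δ * z - ψ z with hg
  have hganti : AntitoneOn g (Iic c) := by
    apply antitoneOn_of_deriv_nonpos (convex_Iic c)
    · -- continuity of g on Iic c
      intro z hz
      have hz' : z < z₀ := lt_of_le_of_lt hz hcz
      exact (((hasDerivAt_id z).const_mul δ).sub (hψderiv z hz')).differentiableAt
        |>.continuousAt.continuousWithinAt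
    · intro z hz
      rw [interior_Iic] at hz
      have hz' : z < z₀ := lt_trans hz hcz
      exact (((hasDerivAt_id z).const_mul δ).sub
        (hψderiv z hz')).differentiableAt.differentiableWithinAt
    · intro z hz
      rw [interior_Iic] at hz
      have hz' : z < z₀ := lt_trans hz hcz
      have : deriv g z = δ - (κ ^ 2 / 2 * deriv (deriv φ) z + ρ * deriv φ z) := by
        have h2 : HasDerivAt g (δ * 1 - (κ ^ 2 / 2 * deriv (deriv φ) z + ρ * deriv φ z)) z :=
          ((hasDerivAt_id z).const_mul δ).sub (hψderiv z hz')
        rw [h2.deriv]; ring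
      rw [this]
      have := hineq z hz'
      linarith
  -- lower bound on ψ
  have hψlb : ∀ z < z₀, -(ρ * M) ≤ ψ z := by
    intro z hz
    have h1 : 0 ≤ κ ^ 2 / 2 * deriv φ z :=
      mul_nonneg (by positivity) (hderiv_nonneg z hz)
    have h2 : -M ≤ φ z := neg_le_of_abs_le (hM z (le_of_lt hz))
    have : -(ρ * M) ≤ ρ * φ z := by nlinarith
    simp only [hψdef]; linarith
  -- the contradiction
  set z : ℝ := c - (ψ c + ρ * M + 1) / δ with hzdef
  have hpos : 0 < ψ c + ρ * M + 1 := by have := hψlb c hcz; linarith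
  have hzc : z ≤ c := by
    have : 0 < (ψ c + ρ * M + 1) / δ := div_pos hpos hδ
    simp [hzdef]; linarith
  have := hganti (hzc.trans le_rfl) (le_refl c) hzc
  -- g c ≤ g z : δ c - ψ c ≤ δ z - ψ z
  have hδcz : δ * (c - z) = ψ c + ρ * M + 1 := by
    rw [hzdef, sub_sub_cancel]; field_simp
  have hψz : ψ z ≤ ψ c - (ψ c + ρ * M + 1) := by
    simp only [hg] at this
    nlinarith
  have := hψlb z (lt_of_le_of_lt hzc hcz)
  linarith
end

section
/- Let Ω := {(z,s) : z < z₀ − λs, s ∈ (0,T]} with λ := κ² + ρ, and define Φ(z,s) := −2M(1 − e^{−rτ})⁻¹(1 − e^{z − z₀ + λs})(1 − e^{−rs}) for constants M > 0, r > 0, τ ∈ (0,T]. Then for the operator J φ := (κ²/2)φ_zz + (ρ − r + κ²/2)φ_z − rφ, one has ∂_s Φ − J Φ ≥ −2Mr(1 − e^{−rτ})⁻¹ on Ω, and Φ = 0 on the parabolic boundary portion where z = z₀ − λs or s = 0. -/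
open Set Real

/-- the comparison function
`Φ(z,s) = −2M(1−e^{−rτ})⁻¹(1−e^{z−z₀+λs})(1−e^{−rs})`, with `λ = κ² + ρ`,
satisfies `∂_s Φ − JΦ ≥ −2Mr(1−e^{−rτ})⁻¹` on
`Ω = {(z,s) : z < z₀ − λs, 0 < s ≤ T}`, where
`Jφ = (κ²/2)φ_zz + (ρ−r+κ²/2)φ_z − rφ`, and `Φ` vanishes on the parabolic
boundary portions `{z = z₀ − λs}` and `{s = 0}`. -/
theorem stmt_18
    (κ ρ r M T τ z₀ lam : ℝ)
    (hr : 0 < r) (hM : 0 < M) (hT : 0 < T) (hτ0 : 0 < τ) (hτT : τ ≤ T)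
    (hlam : lam = κ ^ 2 + ρ)
    (Φ : ℝ → ℝ → ℝ)
    (hΦ : ∀ z s : ℝ, Φ z s =
      -2 * M * (1 - exp (-r * τ))⁻¹ * (1 - exp (z - z₀ + lam * s))
        * (1 - exp (-r * s))) :
    (∀ z s : ℝ, 0 < s → s ≤ T → z < z₀ - lam * s →
      -2 * M * r * (1 - exp (-r * τ))⁻¹ ≤
        deriv (fun t => Φ z t) s
          - (κ ^ 2 / 2 * deriv (deriv (fun x => Φ x s)) z
              + (ρ - r + κ ^ 2 / 2) * deriv (fun x => Φ x s) z
              - r * Φ z s)) ∧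
    (∀ s : ℝ, 0 ≤ s → s ≤ T → Φ (z₀ - lam * s) s = 0) ∧
    (∀ z : ℝ, z ≤ z₀ → Φ z 0 = 0) := by
  have hden : 0 < 1 - exp (-r * τ) := by
    have : exp (-r * τ) < 1 := exp_lt_one_iff.mpr (by nlinarith)
    linarith
  set C : ℝ := -2 * M * (1 - exp (-r * τ))⁻¹ with hC
  have hCneg : C < 0 := by
    have h1 : 0 < (1 - exp (-r * τ))⁻¹ := inv_pos.mpr hden
    have : 0 < 2 * M * (1 - exp (-r * τ))⁻¹ := by positivity
    rw [hC]; nlinarith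
  refine ⟨?_, ?_, ?_⟩
  · intro z s hs hsT hzlt
    -- abbreviations
    set eA : ℝ := exp (z - z₀ + lam * s) with heA
    set eS : ℝ := exp (-r * s) with heS
    -- derivative in s
    have hΦs : deriv (fun t => Φ z t) s
        = C * (-(eA * lam) * (1 - eS) + (1 - eA) * (-(eS * (-r)))) := by
      have hfun : (fun t => Φ z t)
          = fun t => C * ((1 - exp (z - z₀ + lam * t)) * (1 - exp (-r * t))) := by
        funext t; rw [hΦ]; ring
      rw [hfun]
      have h1 : HasDerivAt (fun t => exp (z - z₀ + lam * t)) (eA * lam) s := by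
        have h : HasDerivAt (fun t : ℝ => z - z₀ + lam * t) lam s := by
          simpa using ((hasDerivAt_id s).const_mul lam).const_add (z - z₀)
        simpa [heA] using h.exp
      have h2 : HasDerivAt (fun t => exp (-r * t)) (eS * (-r)) s := by
        have h : HasDerivAt (fun t : ℝ => -r * t) (-r) s := by
          simpa using (hasDerivAt_id s).const_mul (-r)
        simpa [heS] using h.exp
      have h3 := ((h1.const_sub 1).mul (h2.const_sub 1)).const_mul C
      simpa [heA, heS] using h3.deriv
    -- first derivative in z, as a function
    have hd1 : deriv (fun x => Φ x s)
        = fun x => C * (1 - eS) * (-(exp (x - z₀ + lam * s))) := by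
      funext x
      have hfun : (fun x => Φ x s)
          = fun x => C * (1 - eS) * (1 - exp (x - z₀ + lam * s)) := by
        funext x; rw [hΦ]; ring
      rw [hfun]
      have h1 : HasDerivAt (fun x => exp (x - z₀ + lam * s))
          (exp (x - z₀ + lam * s) * 1) x := by
        have h : HasDerivAt (fun x : ℝ => x - z₀ + lam * s) 1 x := by
          simpa using ((hasDerivAt_id x).sub_const z₀).add_const (lam * s)
        exact h.exp
      have h2 := ((h1.const_sub 1).const_mul (C * (1 - eS))).deriv
      rw [h2]; ring
    have hd1z : deriv (fun x => Φ x s) z = C * (1 - eS) * (-eA) := by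
      rw [hd1]
    -- second derivative in z
    have hd2 : deriv (deriv (fun x => Φ x s)) z = C * (1 - eS) * (-eA) := by
      rw [hd1]
      have h1 : HasDerivAt (fun x => exp (x - z₀ + lam * s))
          (exp (z - z₀ + lam * s) * 1) z := by
        have h : HasDerivAt (fun x : ℝ => x - z₀ + lam * s) 1 z := by
          simpa using ((hasDerivAt_id z).sub_const z₀).add_const (lam * s)
        exact h.exp
      have h2 := ((h1.neg).const_mul (C * (1 - eS))).deriv
      simp only [heA]
      rw [show (fun x => C * (1 - eS) * -exp (x - z₀ + lam * s))
          = fun x => C * (1 - eS) * (-exp (x - z₀ + lam * s)) from rfl]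
      simp only [Pi.neg_apply] at h2
      rw [h2]; ring
    rw [hΦs, hd1z, hd2, hΦ]
    have hCform : -2 * M * r * (1 - exp (-r * τ))⁻¹ = C * r := by rw [hC]; ring
    rw [hCform]
    have heApos : 0 < eA := by rw [heA]; exact exp_pos _
    have heS1 : eS < 1 := by
      rw [heS]; exact exp_lt_one_iff.mpr (by nlinarith)
    have key : 0 ≤ (-C) * r * eA * (2 - eS) := by
      have : 0 < 2 - eS := by linarith
      have : 0 ≤ (-C) * r * eA * (2 - eS) := by
        apply mul_nonneg
        apply mul_nonneg
        apply mul_nonneg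
        · linarith
        · linarith
        · linarith
        · linarith
      exact this
    subst hlam
    nlinarith [key]
  · intro s _ _
    rw [hΦ, show z₀ - lam * s - z₀ + lam * s = (0:ℝ) from by ring, exp_zero]
    ring
  · intro z _
    rw [hΦ]
    simp
end
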